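/- Let G be a connected (2K_2, C_3)-free graph (a connected finite simple graph with no induced 2K_2 and no induced C_3), let S be a minimal vertex separator of G with |S| ≥ 2, and let G_1 be a non-trivial connected component of G − S. Let M = { v ∈ V(G_1) : N_G(v) ∩ S = ∅ }. Then the induced subgraph on V(G_1) \ M has no induced path on 4 vertices (it is P_4-free), M is an independent set of G, and there exists a vertex u ∈ V(G_1) \ M that is adjacent to every vertex of M. -/

import Mathlib

/-!
The key is a vertex `y` outside `C ∪ S` adjacent to all of `S`. As `C` contains an edge,
`2K₂`-freeness leaves every vertex outside `C ∪ S` isolated in `G − S`. By minimality each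
`s ∈ S` has a neighbour in the component of each of the two separated vertices, and one of these
components avoids `C`, so it is a single vertex `y`. Hence `S` is independent, and, since `y` has
no neighbour in `C`, every `s ∈ S` is adjacent to an end of every edge of `C`.

By this domination, the vertices of `M` have no neighbour in `M`, and their neighbours are complete
to `S`, hence pairwise non-adjacent. In an induced `P₄` `a b c d` of `C \ M` pick `s ~ a` and
`t ~ d` in `S`: domination of `bc` forces `s ~ c` and `t ~ b`, and then `sa, td` is a `2K₂`.
Finally a vertex of `C \ M` with the most neighbours in `M` sees all of `M`: if it missed `w ∈ M`,
any neighbour of `w` would have strictly more, again by `2K₂`-freeness.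
-/

variable {V : Type*}

/-- The graph `G − S`: delete the vertices of `S` (they become isolated). -/
def SimpleGraph.removeVerts (G : SimpleGraph V) (S : Set V) : SimpleGraph V where
  Adj u v := G.Adj u v ∧ u ∉ S ∧ v ∉ S
  symm := ⟨fun u v ⟨h, hu, hv⟩ => ⟨h.symm, hv, hu⟩⟩
  loopless := ⟨fun u ⟨h, _, _⟩ => G.loopless.irrefl u h⟩

/-- `S` is a minimal vertex separator of `G`: some `a, b ∉ S` lie in different
connected components of `G − S`, while for every proper subset `S' ⊊ S` they lie
in the same connected component of `G − S'`. -/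
def SimpleGraph.IsMinSep (G : SimpleGraph V) (S : Set V) : Prop :=
  ∃ a b : V, a ∉ S ∧ b ∉ S ∧ ¬ (G.removeVerts S).Reachable a b ∧
    ∀ S' : Set V, S' ⊂ S → (G.removeVerts S').Reachable a b

/-- `C` is (the vertex set of) a connected component of `G − S`. -/
def SimpleGraph.IsCompOf (G : SimpleGraph V) (S : Set V) (C : Set V) : Prop :=
  ∃ u : V, u ∉ S ∧ C = {v : V | (G.removeVerts S).Reachable u v ∧ v ∉ S}

/-- `G` has no induced `2K₂`. -/
def SimpleGraph.TwoK2Free (G : SimpleGraph V) : Prop :=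
  ¬ ∃ a b c d : V, a ≠ b ∧ a ≠ c ∧ a ≠ d ∧ b ≠ c ∧ b ≠ d ∧ c ≠ d ∧
    G.Adj a b ∧ G.Adj c d ∧ ¬ G.Adj a c ∧ ¬ G.Adj a d ∧ ¬ G.Adj b c ∧ ¬ G.Adj b d

/-- `G` has an induced cycle on `k` vertices, all of them lying in `A`. -/
def SimpleGraph.HasInducedCycleOn (G : SimpleGraph V) (A : Set V) (k : ℕ) [NeZero k] : Prop :=
  ∃ f : Fin k → V, Function.Injective f ∧ (∀ i, f i ∈ A) ∧
    ∀ i j : Fin k, G.Adj (f i) (f j) ↔ (j = i + 1 ∨ i = j + 1)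

/-- `G` has no induced cycle on `k` vertices. -/
def SimpleGraph.CkFree (G : SimpleGraph V) (k : ℕ) [NeZero k] : Prop :=
  ¬ G.HasInducedCycleOn Set.univ k

/-- `F` is a feedback vertex set of `G`: `G − F` contains no cycle. -/
def SimpleGraph.IsFVS (G : SimpleGraph V) (F : Set V) : Prop :=
  (G.removeVerts F).IsAcyclic

/-- The minimum cardinality of a feedback vertex set of `G`. -/
noncomputable def SimpleGraph.minFVS (G : SimpleGraph V) : ℕ :=
  sInf {n : ℕ | ∃ F : Set V, G.IsFVS F ∧ F.ncard = n}


namespace SimpleGraph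

variable {G : SimpleGraph V} {S C M T : Set V} {a b c d p s u v w x y z : V}

@[simp] lemma removeVerts_empty (G : SimpleGraph V) : G.removeVerts ∅ = G := by
  ext u v
  simp [removeVerts]

lemma TwoK2Free.adj_of_not_adj (h : G.TwoK2Free) (hab : G.Adj a b) (hcd : G.Adj c d)
    (hac : ¬ G.Adj a c) (had : ¬ G.Adj a d) (hbc : ¬ G.Adj b c) : G.Adj b d := by
  by_contra hbd
  refine h ⟨a, b, c, d, hab.ne, ?_, ?_, ?_, ?_, hcd.ne, hab, hcd, hac, had, hbc, hbd⟩ <;>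
    rintro rfl <;> simp_all [G.adj_comm]

lemma CkFree.not_adj_of_adj_of_adj (h : G.CkFree 3) (hab : G.Adj a b) (hbc : G.Adj b c) :
    ¬ G.Adj a c := by
  intro hac
  refine h ⟨![a, b, c], ?_, fun _ => Set.mem_univ _, ?_⟩
  · have := hab.ne; have := hbc.ne; have := hac.ne
    intro i j hij
    fin_cases i <;> fin_cases j <;> simp_all
  · intro i j
    fin_cases i <;> fin_cases j <;>
      simp [hab, hbc, hac, hab.symm, hbc.symm, hac.symm]

lemma IsMinSep.nonempty (hS : G.IsMinSep S) (hG : G.Connected) : S.Nonempty := by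
  obtain ⟨a, b, -, -, hab, -⟩ := hS
  rw [Set.nonempty_iff_ne_empty]
  rintro rfl
  exact hab (by simpa using hG.preconnected a b)

lemma exists_adj_reachable_of_walk (wk : (G.removeVerts (S \ {s})).Walk a b) (ha : a ∉ S)
    (hab : ¬ (G.removeVerts S).Reachable a b) :
    ∃ p, G.Adj s p ∧ (G.removeVerts S).Reachable a p := by
  induction wk with
  | nil => exact absurd .rfl hab
  | @cons x y b h wk ih =>
    by_cases hy : y = s
    · subst hy
      exact ⟨x, h.1.symm, .rfl⟩
    · have hxy : (G.removeVerts S).Adj x y := ⟨h.1, ha, fun hyS => h.2.2 ⟨hyS, hy⟩⟩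
      obtain ⟨p, hsp, hyp⟩ := ih hxy.2.2 fun hyb => hab (hxy.reachable.trans hyb)
      exact ⟨p, hsp, hxy.reachable.trans hyp⟩

namespace IsCompOf

lemma mem_of_adj (hC : G.IsCompOf S C) (hv : v ∈ C) (hvx : G.Adj v x) (hx : x ∉ S) : x ∈ C := by
  obtain ⟨u, -, rfl⟩ := hC
  exact ⟨hv.1.trans (Adj.reachable ⟨hvx, hv.2, hx⟩), hx⟩

lemma not_adj_of_not_mem (hC : G.IsCompOf S C) (hv : v ∈ C) (hxS : x ∉ S) (hxC : x ∉ C) :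
    ¬ G.Adj v x :=
  fun hvx => hxC (hC.mem_of_adj hv hvx hxS)

lemma reachable (hC : G.IsCompOf S C) (hu : u ∈ C) (hv : v ∈ C) :
    (G.removeVerts S).Reachable u v := by
  obtain ⟨z, -, rfl⟩ := hC
  exact hu.1.symm.trans hv.1

lemma nonempty (hC : G.IsCompOf S C) : C.Nonempty := by
  obtain ⟨u, hu, rfl⟩ := hC
  exact ⟨u, .rfl, hu⟩

lemma exists_adj (hC : G.IsCompOf S C) (hnt : C.Nontrivial) (hv : v ∈ C) :
    ∃ x ∈ C, G.Adj v x := by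
  obtain ⟨w, hw, hwv⟩ := hnt.exists_ne v
  obtain ⟨wk⟩ := hC.reachable hv hw
  cases wk with
  | nil => exact absurd rfl hwv
  | cons h _ => exact ⟨_, hC.mem_of_adj hv h.1 h.2.2, h.1⟩

lemma eq_of_reachable (hC : G.IsCompOf S C) (h2k2 : G.TwoK2Free) (hnt : C.Nontrivial)
    (hzS : z ∉ S) (hzC : z ∉ C) (hzp : (G.removeVerts S).Reachable z p) : z = p := by
  obtain ⟨wk⟩ := hzp
  cases wk with
  | nil => rfl
  | @cons _ z₁ _ h _ =>
    obtain ⟨u, hu⟩ := hC.nonempty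
    obtain ⟨x, hx, hux⟩ := hC.exists_adj hnt hu
    have hz₁C : z₁ ∉ C := fun hz₁ => hzC (hC.mem_of_adj hz₁ h.1.symm hzS)
    exact absurd (h2k2.adj_of_not_adj hux h.1 (hC.not_adj_of_not_mem hu hzS hzC)
      (hC.not_adj_of_not_mem hu h.2.2 hz₁C) (hC.not_adj_of_not_mem hx hzS hzC))
      (hC.not_adj_of_not_mem hx h.2.2 hz₁C)

lemma exists_forall_adj_of_isMinSep (hC : G.IsCompOf S C) (hS : G.IsMinSep S)
    (h2k2 : G.TwoK2Free) (hnt : C.Nontrivial) : ∃ y, y ∉ S ∧ y ∉ C ∧ ∀ s ∈ S, G.Adj s y := by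
  obtain ⟨a, b, haS, hbS, hab, hmin⟩ := hS
  wlog haC : a ∉ C generalizing a b
  · exact this b a hbS haS (fun h => hab h.symm) (fun S' h => (hmin S' h).symm)
      fun hbC => hab (hC.reachable (not_not.1 haC) hbC)
  refine ⟨a, haS, haC, fun s hs => ?_⟩
  obtain ⟨wk⟩ := hmin (S \ {s}) (Set.sdiff_singleton_ssubset.2 hs)
  obtain ⟨p, hsp, hap⟩ := exists_adj_reachable_of_walk wk haS hab
  rwa [hC.eq_of_reachable h2k2 hnt haS haC hap]

end IsCompOf

def DominatesEdges (G : SimpleGraph V) (S C : Set V) : Prop :=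
  ∀ s ∈ S, ∀ b ∈ C, ∀ c ∈ C, G.Adj b c → G.Adj s b ∨ G.Adj s c

lemma IsCompOf.dominatesEdges (hC : G.IsCompOf S C) (h2k2 : G.TwoK2Free) (hyS : y ∉ S)
    (hyC : y ∉ C) (hSy : ∀ s ∈ S, G.Adj s y) : G.DominatesEdges S C := by
  intro s hs b hb c hc hbc
  by_contra! h
  exact hC.not_adj_of_not_mem hc hyS hyC (h2k2.adj_of_not_adj (hSy s hs) hbc h.1 h.2
    fun hyb => hC.not_adj_of_not_mem hb hyS hyC hyb.symm).symm

lemma DominatesEdges.mono (hD : G.DominatesEdges S C) (hTC : T ⊆ C) : G.DominatesEdges S T :=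
  fun s hs b hb c hc => hD s hs b (hTC hb) c (hTC hc)

lemma DominatesEdges.forall_adj_of_adj (hD : G.DominatesEdges S C) (hw : w ∈ C)
    (hwS : ∀ s ∈ S, ¬ G.Adj s w) (hx : x ∈ C) (hwx : G.Adj w x) : ∀ s ∈ S, G.Adj s x :=
  fun s hs => (hD s hs w hw x hx hwx).resolve_left (hwS s hs)

lemma TwoK2Free.adj_of_adj_of_adj_of_adj (h2k2 : G.TwoK2Free) (hc3 : G.CkFree 3)
    (hS : ∀ s ∈ S, ∀ t ∈ S, ¬ G.Adj s t) (hT : ∀ v ∈ T, ∃ s ∈ S, G.Adj s v)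
    (hD : G.DominatesEdges S T) (ha : a ∈ T) (hb : b ∈ T) (hc : c ∈ T) (hd : d ∈ T)
    (hab : G.Adj a b) (hbc : G.Adj b c) (hcd : G.Adj c d) : G.Adj a d := by
  obtain ⟨s, hs, hsa⟩ := hT a ha
  obtain ⟨t, ht, htd⟩ := hT d hd
  have hsc : G.Adj s c :=
    (hD s hs b hb c hc hbc).resolve_left (hc3.not_adj_of_adj_of_adj hsa hab)
  have htb : G.Adj t b :=
    (hD t ht b hb c hc hbc).resolve_right (hc3.not_adj_of_adj_of_adj htd hcd.symm)
  exact h2k2.adj_of_not_adj hsa htd (hS s hs t ht) (hc3.not_adj_of_adj_of_adj hsc hcd)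
    fun hat => hc3.not_adj_of_adj_of_adj htb hab.symm hat.symm

lemma TwoK2Free.exists_forall_adj [Finite V] (h2k2 : G.TwoK2Free) (hT : T.Nonempty)
    (hM : ∀ u ∈ M, ∀ v ∈ M, ¬ G.Adj u v) (hMT : ∀ w ∈ M, ∀ x, G.Adj w x → x ∈ T)
    (hN : ∀ w ∈ M, ∀ w' ∈ M, ∀ x x', G.Adj w x → G.Adj w' x' → ¬ G.Adj x x')
    (hdeg : ∀ w ∈ M, ∃ x, G.Adj w x) : ∃ u ∈ T, ∀ w ∈ M, G.Adj u w := by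
  obtain ⟨u, huT, hmax⟩ :=
    T.toFinite.exists_maximalFor (fun v => (G.neighborSet v ∩ M).ncard) T hT
  refine ⟨u, huT, fun w hw => ?_⟩
  by_contra huw
  obtain ⟨x, hwx⟩ := hdeg w hw
  have hsub : G.neighborSet u ∩ M ⊆ G.neighborSet x ∩ M := fun w' ⟨huw', hw'⟩ =>
    ⟨(h2k2.adj_of_not_adj huw' hwx huw (hN w' hw' w hw u x huw'.symm hwx)
      (hM w' hw' w hw)).symm, hw'⟩
  have hlt : (G.neighborSet u ∩ M).ncard < (G.neighborSet x ∩ M).ncard :=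
    Set.ncard_lt_ncard ((Set.ssubset_iff_of_subset hsub).2 ⟨w, ⟨hwx.symm, hw⟩, fun h => huw h.1⟩)
  exact hlt.not_ge (hmax (hMT w hw x hwx) hlt.le)

lemma DominatesEdges.mem_diff_of_adj (hC : G.IsCompOf S C) (hD : G.DominatesEdges S C)
    (hSne : S.Nonempty) (hM : ∀ v, v ∈ M ↔ v ∈ C ∧ ∀ s ∈ S, ¬ G.Adj s v) (hw : w ∈ M)
    (hwx : G.Adj w x) : x ∈ C \ M ∧ ∀ s ∈ S, G.Adj s x := by
  obtain ⟨hwC, hwS⟩ := (hM w).1 hw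
  have hxC : x ∈ C := hC.mem_of_adj hwC hwx fun hxS => hwS x hxS hwx.symm
  have hSx := hD.forall_adj_of_adj hwC hwS hxC hwx
  obtain ⟨s, hs⟩ := hSne
  exact ⟨⟨hxC, fun hxM => ((hM x).1 hxM).2 s hs (hSx s hs)⟩, hSx⟩

lemma DominatesEdges.not_adj_of_mem (hC : G.IsCompOf S C) (hD : G.DominatesEdges S C)
    (hSne : S.Nonempty) (hM : ∀ v, v ∈ M ↔ v ∈ C ∧ ∀ s ∈ S, ¬ G.Adj s v) :
    ∀ u ∈ M, ∀ v ∈ M, ¬ G.Adj u v :=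
  fun _ hu _ hv huv => (hD.mem_diff_of_adj hC hSne hM hu huv).1.2 hv

lemma DominatesEdges.exists_forall_adj [Finite V] (h2k2 : G.TwoK2Free) (hc3 : G.CkFree 3)
    (hC : G.IsCompOf S C) (hnt : C.Nontrivial) (hD : G.DominatesEdges S C) (hSne : S.Nonempty)
    (hM : ∀ v, v ∈ M ↔ v ∈ C ∧ ∀ s ∈ S, ¬ G.Adj s v) : ∃ u ∈ C \ M, ∀ w ∈ M, G.Adj u w := by
  have hnbr := fun w (hw : w ∈ M) x (hwx : G.Adj w x) => hD.mem_diff_of_adj hC hSne hM hw hwx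
  have hdeg : ∀ w ∈ M, ∃ x, G.Adj w x := fun w hw =>
    let ⟨x, _, hwx⟩ := hC.exists_adj hnt ((hM w).1 hw).1
    ⟨x, hwx⟩
  have hT : (C \ M).Nonempty := by
    obtain ⟨v, hv⟩ := hC.nonempty
    by_cases hvM : v ∈ M
    · obtain ⟨x, hvx⟩ := hdeg v hvM
      exact ⟨x, (hnbr v hvM x hvx).1⟩
    · exact ⟨v, hv, hvM⟩
  obtain ⟨s, hs⟩ := hSne
  exact h2k2.exists_forall_adj hT (hD.not_adj_of_mem hC ⟨s, hs⟩ hM)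
    (fun w hw x hwx => (hnbr w hw x hwx).1)
    (fun w hw w' hw' x x' hwx hw'x' hxx' =>
      hc3.not_adj_of_adj_of_adj ((hnbr w hw x hwx).2 s hs) hxx' ((hnbr w' hw' x' hw'x').2 s hs))
    hdeg

end SimpleGraph

theorem stmt15_general [Fintype V] (G : SimpleGraph V) (S C M : Set V)
    (hconn : G.Connected) (h2k2 : G.TwoK2Free) (hc3 : G.CkFree 3)
    (hS : G.IsMinSep S)
    (hC : G.IsCompOf S C) (hnt : ¬ ∃ v, C = {v})
    (hM : M = {v ∈ C | G.neighborSet v ∩ S = ∅}) :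
    (¬ ∃ a b c d : V, a ∈ C \ M ∧ b ∈ C \ M ∧ c ∈ C \ M ∧ d ∈ C \ M ∧
      a ≠ b ∧ a ≠ c ∧ a ≠ d ∧ b ≠ c ∧ b ≠ d ∧ c ≠ d ∧
      G.Adj a b ∧ G.Adj b c ∧ G.Adj c d ∧ ¬ G.Adj a c ∧ ¬ G.Adj a d ∧ ¬ G.Adj b d) ∧
    (∀ u ∈ M, ∀ v ∈ M, ¬ G.Adj u v) ∧
    (∃ u ∈ C \ M, ∀ w ∈ M, G.Adj u w) := by
  have hM' : ∀ v, v ∈ M ↔ v ∈ C ∧ ∀ s ∈ S, ¬ G.Adj s v := by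
    intro v
    simp only [hM, Set.mem_ofPred_eq, Set.eq_empty_iff_forall_notMem, Set.mem_inter_iff,
      SimpleGraph.mem_neighborSet, not_and, G.adj_comm v]
    exact and_congr_right fun _ => forall_congr' fun _ => imp_not_comm
  have hSne := hS.nonempty hconn
  have hCnt : C.Nontrivial := hC.nonempty.exists_eq_singleton_or_nontrivial.resolve_left hnt
  obtain ⟨y, hyS, hyC, hSy⟩ := hC.exists_forall_adj_of_isMinSep hS h2k2 hCnt
  have hD := hC.dominatesEdges h2k2 hyS hyC hSy
  refine ⟨?_, hD.not_adj_of_mem hC hSne hM', hD.exists_forall_adj h2k2 hc3 hC hCnt hSne hM'⟩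
  rintro ⟨a, b, c, d, ha, hb, hc, hd, -, -, -, -, -, -, hab, hbc, hcd, -, had, -⟩
  have hSind : ∀ s ∈ S, ∀ t ∈ S, ¬ G.Adj s t := fun s hs t ht hst =>
    hc3.not_adj_of_adj_of_adj hst (hSy t ht) (hSy s hs)
  have hCM : ∀ v ∈ C \ M, ∃ s ∈ S, G.Adj s v := fun v hv => by
    by_contra! h
    exact hv.2 ((hM' v).2 ⟨hv.1, h⟩)
  exact had (h2k2.adj_of_adj_of_adj_of_adj hc3 hSind hCM (hD.mono Set.sdiff_subset)
    ha hb hc hd hab hbc hcd)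

theorem stmt15 [Fintype V] (G : SimpleGraph V) (S C M : Set V)
    (hconn : G.Connected) (h2k2 : G.TwoK2Free) (hc3 : G.CkFree 3)
    (hS : G.IsMinSep S) (hcard : 2 ≤ S.ncard)
    (hC : G.IsCompOf S C) (hnt : ¬ ∃ v, C = {v})
    (hM : M = {v ∈ C | G.neighborSet v ∩ S = ∅}) :
    (¬ ∃ a b c d : V, a ∈ C \ M ∧ b ∈ C \ M ∧ c ∈ C \ M ∧ d ∈ C \ M ∧
      a ≠ b ∧ a ≠ c ∧ a ≠ d ∧ b ≠ c ∧ b ≠ d ∧ c ≠ d ∧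
      G.Adj a b ∧ G.Adj b c ∧ G.Adj c d ∧ ¬ G.Adj a c ∧ ¬ G.Adj a d ∧ ¬ G.Adj b d) ∧
    (∀ u ∈ M, ∀ v ∈ M, ¬ G.Adj u v) ∧
    (∃ u ∈ C \ M, ∀ w ∈ M, G.Adj u w) :=
  stmt15_general G S C M hconn h2k2 hc3 hS hC hnt hM
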